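/- For all integers p, q ≥ 0, the set 𝒫(p,q) of weighted (p,q) Delannoy paths is in bijection with the set of signed (p,q)-involutions; in particular |𝒫(p,q)| = α_{p,q}. -/

import Mathlib

/-- A signed `(p,q)`-involution: a pair `(π, ε)` where `π` is an involution of
`{1,…,p+q}` and `ε` assigns a sign (`true` = `+`, `false` = `-`) to each fixed
point of `π` (we normalize `ε` to be `true` on non-fixed points), such that the
number of fixed points with sign `+` minus the number of fixed points with
sign `-` equals `p - q`. -/
def IsSignedInv (p q : ℕ) (x : Equiv.Perm (Fin (p + q)) × (Fin (p + q) → Bool)) : Prop :=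
  x.1 * x.1 = 1 ∧ (∀ i, x.1 i ≠ i → x.2 i = true) ∧
    ((Finset.univ.filter fun i => x.1 i = i ∧ x.2 i = true).card : ℤ) -
      ((Finset.univ.filter fun i => x.1 i = i ∧ x.2 i = false).card : ℤ) = (p : ℤ) - (q : ℤ)

/-- `γ_{k,p,q}`: the number of signed `(p,q)`-involutions whose underlying
involution has exactly `k` two-cycles, i.e. exactly `2k` non-fixed points. -/
noncomputable def gammaCount (k p q : ℕ) : ℕ :=
  Nat.card {x : Equiv.Perm (Fin (p + q)) × (Fin (p + q) → Bool) //
    IsSignedInv p q x ∧ (Finset.univ.filter fun i => x.1 i ≠ i).card = 2 * k}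

/-- `α_{p,q}`: the number of signed `(p,q)`-involutions. -/
noncomputable def alphaCount (p q : ℕ) : ℕ :=
  Nat.card {x : Equiv.Perm (Fin (p + q)) × (Fin (p + q) → Bool) // IsSignedInv p q x}
/-- A step of a lattice path: east `(1,0)`, north `(0,1)`, or diagonal `(1,1)`. -/
inductive DStep : Type
  | E | N | D
deriving DecidableEq

/-- The displacement vector of a step. -/
def stepVec : DStep → ℕ × ℕ
  | .E => (1, 0)
  | .N => (0, 1)
  | .D => (1, 1)

/-- A `(p,q)` Delannoy path: a sequence of steps `E`, `N`, `D` whose total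
displacement from `(0,0)` is `(p,q)`. -/
def IsDelannoy (p q : ℕ) (l : List DStep) : Prop :=
  (l.map stepVec).sum = (p, q)

/-- `D(p,q)`, the number of `(p,q)` Delannoy paths. -/
noncomputable def delannoyNum (p q : ℕ) : ℕ :=
  Nat.card {l : List DStep // IsDelannoy p q l}

/-- The weight of the part of a Delannoy path starting at the given lattice
point: a diagonal step starting at `(a,b)` contributes a factor `a+b+1`,
other steps contribute `1`. -/
def weightFrom : ℕ × ℕ → List DStep → ℕ
  | _, [] => 1
  | ab, s :: t => (if s = DStep.D then ab.1 + ab.2 + 1 else 1) * weightFrom (ab + stepVec s) t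

/-- The weight `ω(L)` of a Delannoy path `L` (starting at the origin): the
product over all diagonal steps going from a point `(a,b)` to `(a+1,b+1)`
of the numbers `a+b+1`. -/
def weight (l : List DStep) : ℕ := weightFrom (0, 0) l

/-- Validity of labels along a weighted Delannoy path starting at the given
lattice point: a diagonal step starting at `(a,b)` may carry any label `m`
with `1 ≤ m ≤ a+b+1`; non-diagonal steps carry no label (normalized to `0`). -/
def IsWeightedFrom : ℕ × ℕ → List (DStep × ℕ) → Prop
  | _, [] => True
  | ab, s :: t =>
      (if s.1 = DStep.D then 1 ≤ s.2 ∧ s.2 ≤ ab.1 + ab.2 + 1 else s.2 = 0) ∧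
        IsWeightedFrom (ab + stepVec s.1) t

/-- A weighted `(p,q)` Delannoy path: a `(p,q)` Delannoy path together with an
integer label on each diagonal step, a diagonal step from `(a,b)` to
`(a+1,b+1)` carrying a label `m` with `1 ≤ m ≤ a+b+1`. -/
def IsWeightedDelannoy (p q : ℕ) (l : List (DStep × ℕ)) : Prop :=
  ((l.map fun s => stepVec s.1).sum = (p, q)) ∧ IsWeightedFrom (0, 0) l

/-!
Both sides obey the recurrence `N(p+1,q+1) = N(p+1,q) + N(p,q+1) + (p+q+1) N(p,q)` with
`N(p,0) = N(0,q) = 1`, and we realise it by explicit bijections. A weighted path to `(p+1,q+1)`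
ends with an `N` step, an `E` step, or a diagonal step out of `(p,q)` carrying one of `p+q+1`
labels. In a signed involution on `p+q+2` points, a chosen point `a` is either fixed with sign `-`
or `+`, leaving a signed involution of the other `p+q+1` points whose charge `#(+) - #(-)` is one
more or one less, or it is swapped with one of the other `p+q+1` points `b`, leaving a signed
involution of the remaining `p+q` points with the same charge. Signed involutions are therefore
set up on an arbitrary finite type, so that these complements need no renumbering.
-/

open Equiv Finset

def displacement (l : List (DStep × ℕ)) : ℕ × ℕ := (l.map fun s => stepVec s.1).sum

@[simp]
lemma displacement_cons (s : DStep × ℕ) (l : List (DStep × ℕ)) :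
    displacement (s :: l) = stepVec s.1 + displacement l := by
  simp [displacement]

@[simp]
lemma displacement_append (l₁ l₂ : List (DStep × ℕ)) :
    displacement (l₁ ++ l₂) = displacement l₁ + displacement l₂ := by
  simp [displacement]

@[simp]
lemma displacement_singleton (s : DStep × ℕ) : displacement [s] = stepVec s.1 := by
  simp [displacement]

def IsValidLabel (ab : ℕ × ℕ) (s : DStep × ℕ) : Prop :=
  if s.1 = DStep.D then 1 ≤ s.2 ∧ s.2 ≤ ab.1 + ab.2 + 1 else s.2 = 0

lemma isWeightedFrom_append (ab : ℕ × ℕ) (l₁ l₂ : List (DStep × ℕ)) :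
    IsWeightedFrom ab (l₁ ++ l₂) ↔
      IsWeightedFrom ab l₁ ∧ IsWeightedFrom (ab + displacement l₁) l₂ := by
  induction l₁ generalizing ab with
  | nil => simp [IsWeightedFrom, displacement]
  | cons s t ih => simp [IsWeightedFrom, ih, add_assoc, and_assoc]

lemma isWeightedDelannoy_append_singleton {p q : ℕ} {l : List (DStep × ℕ)} {s : DStep × ℕ} :
    IsWeightedDelannoy p q (l ++ [s]) ↔
      ∃ a b, IsWeightedDelannoy a b l ∧ (a, b) + stepVec s.1 = (p, q) ∧ IsValidLabel (a, b) s := by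
  change displacement (l ++ [s]) = (p, q) ∧ _ ↔ ∃ a b, (displacement l = (a, b) ∧ _) ∧ _
  have hs : ∀ ab, IsWeightedFrom ab [s] ↔ IsValidLabel ab s := fun _ => by
    simp [IsWeightedFrom, IsValidLabel]
  simp only [displacement_append, displacement_singleton, isWeightedFrom_append, hs,
    Prod.mk_zero_zero, zero_add]
  constructor
  · rintro ⟨hsum, hl, hs⟩
    exact ⟨(displacement l).1, (displacement l).2, ⟨rfl, hl⟩, hsum, hs⟩
  · rintro ⟨a, b, ⟨hab, hl⟩, hsum, hs⟩
    rw [hab]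
    exact ⟨hsum, hl, hs⟩

lemma eq_replicate_E {ab : ℕ × ℕ} {l : List (DStep × ℕ)} {p : ℕ} (hl : IsWeightedFrom ab l)
    (hd : displacement l = (p, 0)) : l = List.replicate p (DStep.E, 0) := by
  induction l generalizing ab p with
  | nil => simp_all [displacement, Prod.ext_iff]
  | cons s t ih =>
    obtain ⟨hk, ht⟩ := hl
    obtain ⟨step, k⟩ := s
    cases step <;> simp [stepVec, Prod.ext_iff] at hd
    obtain ⟨rfl, hd⟩ := hd
    simp at hk
    rw [hk, add_comm, List.replicate_succ, ← ih ht (Prod.ext rfl hd)]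

lemma eq_replicate_N {ab : ℕ × ℕ} {l : List (DStep × ℕ)} {q : ℕ} (hl : IsWeightedFrom ab l)
    (hd : displacement l = (0, q)) : l = List.replicate q (DStep.N, 0) := by
  induction l generalizing ab q with
  | nil => simp_all [displacement, Prod.ext_iff]
  | cons s t ih =>
    obtain ⟨hk, ht⟩ := hl
    obtain ⟨step, k⟩ := s
    cases step <;> simp [stepVec, Prod.ext_iff] at hd
    obtain ⟨hd, rfl⟩ := hd
    simp at hk
    rw [hk, add_comm, List.replicate_succ, ← ih ht (Prod.ext hd rfl)]

lemma isWeightedFrom_replicate (ab : ℕ × ℕ) (n : ℕ) {t : DStep} (ht : t ≠ DStep.D) :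
    IsWeightedFrom ab (List.replicate n (t, 0)) := by
  induction n generalizing ab with
  | zero => trivial
  | succ n ih => exact ⟨by simp [ht], ih _⟩

abbrev WeightedPath (p q : ℕ) := {l : List (DStep × ℕ) // IsWeightedDelannoy p q l}

namespace WeightedPath

instance (p : ℕ) : Unique (WeightedPath p 0) where
  default := ⟨List.replicate p (DStep.E, 0), by simp [stepVec],
    isWeightedFrom_replicate _ _ (by decide)⟩
  uniq l := Subtype.ext (eq_replicate_E l.2.2 l.2.1)

instance (q : ℕ) : Unique (WeightedPath 0 q) where
  default := ⟨List.replicate q (DStep.N, 0), by simp [stepVec],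
    isWeightedFrom_replicate _ _ (by decide)⟩
  uniq l := Subtype.ext (eq_replicate_N l.2.2 l.2.1)

def snocStep (p q : ℕ) :
    (WeightedPath (p + 1) q ⊕ WeightedPath p (q + 1)) ⊕ Fin (p + q + 1) × WeightedPath p q →
      WeightedPath (p + 1) (q + 1)
  | .inl (.inl l) => ⟨l.1 ++ [(.N, 0)],
      isWeightedDelannoy_append_singleton.2 ⟨_, _, l.2, rfl, by simp [IsValidLabel]⟩⟩
  | .inl (.inr l) => ⟨l.1 ++ [(.E, 0)],
      isWeightedDelannoy_append_singleton.2 ⟨_, _, l.2, rfl, by simp [IsValidLabel]⟩⟩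
  | .inr (m, l) => ⟨l.1 ++ [(DStep.D, (m : ℕ) + 1)],
      isWeightedDelannoy_append_singleton.2 ⟨_, _, l.2, rfl, by simp [IsValidLabel]; omega⟩⟩

lemma snocStep_injective (p q : ℕ) : Function.Injective (snocStep p q) := by
  rintro ((l₁ | l₁) | ⟨m₁, l₁⟩) ((l₂ | l₂) | ⟨m₂, l₂⟩) h <;>
    have h := congrArg Subtype.val h <;> simp [snocStep] at h <;>
    simp only [Sum.inl.injEq, Sum.inr.injEq, Prod.mk.injEq, Subtype.ext_iff, Fin.ext_iff, h,
      and_self]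

lemma snocStep_surjective (p q : ℕ) : Function.Surjective (snocStep p q) := by
  rintro ⟨l, hl⟩
  obtain ⟨t, ⟨step, k⟩, rfl⟩ : ∃ t s, l = t ++ [s] :=
    (List.eq_nil_or_concat' l).resolve_left fun h => by
      simp [h, IsWeightedDelannoy, Prod.ext_iff] at hl
  obtain ⟨a, b, ht, hsum, hk⟩ := isWeightedDelannoy_append_singleton.1 hl
  cases step <;> simp [stepVec, IsValidLabel] at hsum hk <;> obtain ⟨rfl, rfl⟩ := hsum
  · exact ⟨.inl (.inr ⟨t, ht⟩), by simp [snocStep, hk]⟩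
  · exact ⟨.inl (.inl ⟨t, ht⟩), by simp [snocStep, hk]⟩
  · exact ⟨.inr (⟨k - 1, by omega⟩, ⟨t, ht⟩), by simp [snocStep]; omega⟩

noncomputable def snocEquiv (p q : ℕ) :
    (WeightedPath (p + 1) q ⊕ WeightedPath p (q + 1)) ⊕ Fin (p + q + 1) × WeightedPath p q ≃
      WeightedPath (p + 1) (q + 1) :=
  .ofBijective _ ⟨snocStep_injective p q, snocStep_surjective p q⟩

end WeightedPath

section Involutions

variable {α : Type*} [DecidableEq α]

def fixedSign (σ : Perm α) (ε : α → Bool) (a : α) : ℤ :=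
  if σ a = a then (if ε a then 1 else -1) else 0

section FixedSign

variable {σ : Perm α} {ε : α → Bool} {a : α}

lemma fixedSign_le_one : fixedSign σ ε a ≤ 1 := by
  unfold fixedSign
  split_ifs <;> norm_num

lemma neg_one_le_fixedSign : -1 ≤ fixedSign σ ε a := by
  unfold fixedSign
  split_ifs <;> norm_num

lemma fixedSign_eq_one_iff : fixedSign σ ε a = 1 ↔ σ a = a ∧ ε a = true := by
  unfold fixedSign
  split_ifs <;> simp_all

lemma fixedSign_eq_neg_one_iff : fixedSign σ ε a = -1 ↔ σ a = a ∧ ε a = false := by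
  unfold fixedSign
  split_ifs <;> simp_all

lemma fixedSign_subtype {p : α → Prop} {τ : Perm (Subtype p)} {η : Subtype p → Bool}
    (a : Subtype p) (hσ : σ a = τ a) (hε : ε a = η a) : fixedSign σ ε a = fixedSign τ η a := by
  simp [fixedSign, hσ, hε, Subtype.ext_iff]

end FixedSign

variable [Fintype α]

lemma Fintype.card_subtype_ne_and_ne {a b : α} (hb : b ≠ a) :
    Fintype.card {c // c ≠ a ∧ c ≠ b} = Fintype.card α - 2 := by
  have : (univ.filter fun c => c ≠ a ∧ c ≠ b) = (univ.erase a).erase b := by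
    ext c
    simp [and_comm]
  rw [Fintype.card_subtype, this, card_erase_of_mem (by simpa using hb),
    card_erase_of_mem (mem_univ a), card_univ]
  omega

lemma sum_fixedSign_eq_card_sub_card (σ : Perm α) (ε : α → Bool) :
    ∑ a, fixedSign σ ε a = ((univ.filter fun a => σ a = a ∧ ε a = true).card : ℤ) -
      ((univ.filter fun a => σ a = a ∧ ε a = false).card : ℤ) := by
  simp only [card_filter, Nat.cast_sum, ← sum_sub_distrib]
  refine sum_congr rfl fun a _ => ?_
  unfold fixedSign
  split_ifs <;> simp_all

lemma sum_fixedSign_eq_add (p : α → Prop) [DecidablePred p] {σ : Perm α} {ε : α → Bool}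
    {τ : Perm {a // p a}} {η : {a // p a} → Bool} {ρ : Perm {a // ¬p a}} {θ : {a // ¬p a} → Bool}
    (hτ : ∀ a : {a // p a}, σ a = τ a ∧ ε a = η a) (hρ : ∀ a : {a // ¬p a}, σ a = ρ a ∧ ε a = θ a) :
    ∑ a, fixedSign σ ε a = ∑ a, fixedSign τ η a + ∑ a, fixedSign ρ θ a := by
  rw [← Fintype.sum_subtype_add_sum_subtype p]
  congr 1
  exacts [Fintype.sum_congr _ _ fun a => fixedSign_subtype a (hτ a).1 (hτ a).2,
    Fintype.sum_congr _ _ fun a => fixedSign_subtype a (hρ a).1 (hρ a).2]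

/-- For `α = Fin (p + q)` and `d = p - q` these are the signed `(p,q)`-involutions. -/
@[ext]
structure SignedInvolution (α : Type*) [Fintype α] [DecidableEq α] (d : ℤ) where
  perm : Perm α
  sign : α → Bool
  perm_mul_self : perm * perm = 1
  sign_eq_true_of_ne : ∀ a, perm a ≠ a → sign a = true
  sum_fixedSign : ∑ a, fixedSign perm sign a = d

namespace SignedInvolution

variable {d : ℤ}

@[simp]
lemma perm_perm (x : SignedInvolution α d) (a : α) : x.perm (x.perm a) = a := by
  simpa using DFunLike.congr_fun x.perm_mul_self a

def equivSubtype (d : ℤ) : SignedInvolution α d ≃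
    {x : Perm α × (α → Bool) // x.1 * x.1 = 1 ∧ (∀ a, x.1 a ≠ a → x.2 a = true) ∧
      ((univ.filter fun a => x.1 a = a ∧ x.2 a = true).card : ℤ) -
        ((univ.filter fun a => x.1 a = a ∧ x.2 a = false).card : ℤ) = d} where
  toFun x := ⟨(x.perm, x.sign), x.perm_mul_self, x.sign_eq_true_of_ne,
    (sum_fixedSign_eq_card_sub_card _ _).symm.trans x.sum_fixedSign⟩
  invFun x := ⟨x.1.1, x.1.2, x.2.1, x.2.2.1,
    (sum_fixedSign_eq_card_sub_card _ _).trans x.2.2.2⟩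

lemma perm_eq_self_and_sign_eq_true (x : SignedInvolution α d) (h : d = Fintype.card α)
    (a : α) : x.perm a = a ∧ x.sign a = true :=
  fixedSign_eq_one_iff.1 <|
    (sum_eq_sum_iff_of_le (f := fixedSign x.perm x.sign) (g := 1) fun _ _ => fixedSign_le_one).1
      (by simpa [h] using x.sum_fixedSign) a (mem_univ a)

lemma perm_eq_self_and_sign_eq_false (x : SignedInvolution α d) (h : d = -Fintype.card α)
    (a : α) : x.perm a = a ∧ x.sign a = false :=
  fixedSign_eq_neg_one_iff.1 <| Eq.symm <|
    (sum_eq_sum_iff_of_le (f := -1) (g := fixedSign x.perm x.sign)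
      fun _ _ => neg_one_le_fixedSign).1 (by simpa [h] using x.sum_fixedSign.symm) a (mem_univ a)

abbrev uniqueOfEqCard (h : d = Fintype.card α) : Unique (SignedInvolution α d) where
  default := ⟨1, fun _ => true, mul_one 1, fun _ h => absurd rfl h, by simp [fixedSign, h]⟩
  uniq x := by
    ext a
    · simp [(x.perm_eq_self_and_sign_eq_true h a).1]
    · simp [(x.perm_eq_self_and_sign_eq_true h a).2]

abbrev uniqueOfEqNegCard (h : d = -Fintype.card α) : Unique (SignedInvolution α d) where
  default := ⟨1, fun _ => false, mul_one 1, fun _ h => absurd rfl h, by simp [fixedSign, h]⟩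
  uniq x := by
    ext a
    · simp [(x.perm_eq_self_and_sign_eq_false h a).1]
    · simp [(x.perm_eq_self_and_sign_eq_false h a).2]

def AgreesOff {c : ℤ} (x : SignedInvolution α d) (p : α → Prop) [DecidablePred p]
    (y : SignedInvolution {a // ¬p a} c) : Prop :=
  ∀ a : {a // ¬p a}, x.perm a = y.perm a ∧ x.sign a = y.sign a

section Restrict

variable {p : α → Prop} [DecidablePred p] {c d' : ℤ} {y : SignedInvolution {a // ¬p a} c}

lemma AgreesOff.prop_perm_iff {x : SignedInvolution α d} (hx : x.AgreesOff p y) (a : α) :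
    p (x.perm a) ↔ p a := by
  refine ⟨fun h => by_contra fun ha => ?_, fun ha => by_contra fun h => ?_⟩
  · exact (y.perm ⟨a, ha⟩).2 ((hx ⟨a, ha⟩).1 ▸ h)
  · have := (hx ⟨_, h⟩).1
    rw [perm_perm] at this
    exact (y.perm ⟨_, h⟩).2 (this ▸ ha)

def restrict (x : SignedInvolution α d) (hx : x.AgreesOff p y) (h : d = d' + c) :
    SignedInvolution {a // p a} d' where
  perm := x.perm.subtypePerm hx.prop_perm_iff
  sign a := x.sign a
  perm_mul_self := by ext; simp
  sign_eq_true_of_ne a ha := x.sign_eq_true_of_ne a (by simpa [Subtype.ext_iff] using ha)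
  sum_fixedSign := by
    have := x.sum_fixedSign
    rw [sum_fixedSign_eq_add p (τ := x.perm.subtypePerm hx.prop_perm_iff)
      (η := fun a => x.sign a) (fun a => ⟨rfl, rfl⟩) hx, y.sum_fixedSign] at this
    omega

variable (y) in
def extend (z : SignedInvolution {a // p a} d') (h : d = d' + c) : SignedInvolution α d where
  perm := z.perm.subtypeCongr y.perm
  sign a := if h : p a then z.sign ⟨a, h⟩ else y.sign ⟨a, h⟩
  perm_mul_self := by
    rw [Perm.mul_def, Perm.subtypeCongr.trans, ← Perm.mul_def, ← Perm.mul_def, z.perm_mul_self,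
      y.perm_mul_self]
    exact Perm.subtypeCongr.refl
  sign_eq_true_of_ne a ha := by
    by_cases h : p a
    · rw [Perm.subtypeCongr.left_apply _ _ h] at ha
      simpa [h] using z.sign_eq_true_of_ne _ fun e => ha (by rw [e])
    · rw [Perm.subtypeCongr.right_apply _ _ h] at ha
      simpa [h] using y.sign_eq_true_of_ne _ fun e => ha (by rw [e])
  sum_fixedSign := by
    rw [sum_fixedSign_eq_add p (τ := z.perm) (η := z.sign) (ρ := y.perm) (θ := y.sign),
      z.sum_fixedSign, y.sum_fixedSign, h]
    · exact fun a => ⟨Perm.subtypeCongr.left_apply_subtype _ _ a, by simp [a.2]⟩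
    · exact fun a => ⟨Perm.subtypeCongr.right_apply_subtype _ _ a, by simp [a.2]⟩

lemma extend_agreesOff (z : SignedInvolution {a // p a} d') (h : d = d' + c) :
    (extend y z h).AgreesOff p y :=
  fun a => ⟨Perm.subtypeCongr.right_apply_subtype _ _ a, by simp [extend, a.2]⟩

variable (y) in
def restrictEquiv (h : d = d' + c) :
    {x : SignedInvolution α d // x.AgreesOff p y} ≃ SignedInvolution {a // p a} d' where
  toFun x := restrict x.1 x.2 h
  invFun z := ⟨extend y z h, extend_agreesOff z h⟩
  left_inv x := by
    ext a <;> by_cases ha : p a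
    · simp [restrict, extend, Perm.subtypeCongr.left_apply _ _ ha]
    · simp [extend, Perm.subtypeCongr.right_apply _ _ ha, (x.2 ⟨a, ha⟩).1]
    · simp [restrict, extend, ha]
    · simp [extend, ha, (x.2 ⟨a, ha⟩).2]
  right_inv z := by
    ext a
    · simp [restrict, extend, Perm.subtypeCongr.left_apply_subtype]
    · simp [restrict, extend, a.2]

end Restrict

section Point

variable (a : α)

def fixedPoint (s : Bool) : SignedInvolution {b // ¬b ≠ a} (if s then 1 else -1) where
  perm := 1
  sign _ := s
  perm_mul_self := mul_one 1
  sign_eq_true_of_ne _ h := absurd rfl h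
  sum_fixedSign := by
    have : Unique {b // ¬b ≠ a} := ⟨⟨⟨a, not_not.2 rfl⟩⟩, fun b => Subtype.ext (not_not.1 b.2)⟩
    simp [fixedSign]

def transposition (b : α) (hb : b ≠ a) : SignedInvolution {c // ¬(c ≠ a ∧ c ≠ b)} 0 where
  perm := (swap a b).subtypePerm fun c => by simp [swap_apply_eq_iff]; tauto
  sign _ := true
  perm_mul_self := by ext; simp
  sign_eq_true_of_ne _ _ := rfl
  sum_fixedSign := sum_eq_zero fun c _ => if_neg <| by
    have := c.2
    simp only [ne_eq, Subtype.ext_iff, Perm.subtypePerm_apply]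
    rw [← ne_eq, swap_apply_ne_self_iff]
    tauto

def roleAt (x : SignedInvolution α d) : Bool ⊕ {b // b ≠ a} :=
  if h : x.perm a = a then .inl (x.sign a) else .inr ⟨x.perm a, h⟩

lemma roleAt_eq_inl_iff (x : SignedInvolution α d) (s : Bool) :
    roleAt a x = .inl s ↔ x.AgreesOff (· ≠ a) (fixedPoint a s) := by
  have : x.AgreesOff (· ≠ a) (fixedPoint a s) ↔ x.perm a = a ∧ x.sign a = s := by
    simp [AgreesOff, fixedPoint]
  rw [this, roleAt]
  split_ifs with h <;> simp [h]

lemma roleAt_eq_inr_iff (x : SignedInvolution α d) (b : {b // b ≠ a}) :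
    roleAt a x = .inr b ↔ x.AgreesOff (fun c => c ≠ a ∧ c ≠ b) (transposition a b b.2) := by
  have : x.AgreesOff (fun c => c ≠ a ∧ c ≠ b) (transposition a b b.2) ↔ x.perm a = b := by
    simp only [AgreesOff, transposition, Subtype.forall, Perm.subtypePerm_apply, not_and_or,
      not_not]
    refine ⟨fun h => by simpa using (h a (.inl rfl)).1, fun h c hc => ?_⟩
    have hb : x.perm b = a := by rw [← h, perm_perm]
    rcases hc with rfl | rfl
    · exact ⟨by simp [h], x.sign_eq_true_of_ne _ (h ▸ b.2)⟩
    · exact ⟨by simp [hb], x.sign_eq_true_of_ne _ (by rw [hb]; exact b.2.symm)⟩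
  rw [this, roleAt]
  split_ifs with h
  · simp [h, Ne.symm b.2]
  · simp [Subtype.ext_iff]

def decomposeAt : SignedInvolution α d ≃
    (SignedInvolution {b // b ≠ a} (d + 1) ⊕ SignedInvolution {b // b ≠ a} (d - 1)) ⊕
      Σ b : {b // b ≠ a}, SignedInvolution {c // c ≠ a ∧ c ≠ b} d :=
  (sigmaFiberEquiv (roleAt a)).symm.trans <| (sumSigmaDistrib _).trans <|
    sumCongr
      ((sigmaCongrRight (β₂ := fun s => bif s then SignedInvolution {b // b ≠ a} (d - 1)
          else SignedInvolution {b // b ≠ a} (d + 1)) fun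
        | false => (subtypeEquivRight (roleAt_eq_inl_iff a · false)).trans
            (restrictEquiv (fixedPoint a false) (by simp))
        | true => (subtypeEquivRight (roleAt_eq_inl_iff a · true)).trans
            (restrictEquiv (fixedPoint a true) (by simp))).trans (sumEquivSigmaBool _ _).symm)
      (sigmaCongrRight fun b => (subtypeEquivRight (roleAt_eq_inr_iff a · b)).trans
        (restrictEquiv (transposition a b b.2) (by simp)))

end Point

end SignedInvolution

end Involutions

open SignedInvolution in
theorem nonempty_weightedPath_equiv_signedInvolution :
    ∀ (p q : ℕ) (α : Type) [Fintype α] [DecidableEq α] (d : ℤ), Fintype.card α = p + q →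
      d = p - q → Nonempty (WeightedPath p q ≃ SignedInvolution α d)
  | p, 0, α, _, _, d, hα, hd =>
    have := uniqueOfEqCard (α := α) (d := d) (by simp [hα, hd])
    ⟨.ofUnique _ _⟩
  | 0, q + 1, α, _, _, d, hα, hd =>
    have := uniqueOfEqNegCard (α := α) (d := d) (by simp [hα, hd])
    ⟨.ofUnique _ _⟩
  | p + 1, q + 1, α, _, _, d, hα, hd => by
    obtain ⟨a⟩ : Nonempty α := Fintype.card_pos_iff.1 (by omega)
    have hα₁ : Fintype.card {b // b ≠ a} = p + q + 1 := by simp [hα]; omega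
    obtain ⟨eN⟩ := nonempty_weightedPath_equiv_signedInvolution (p + 1) q {b // b ≠ a} (d + 1)
      (by omega) (by push_cast at hd ⊢; omega)
    obtain ⟨eE⟩ := nonempty_weightedPath_equiv_signedInvolution p (q + 1) {b // b ≠ a} (d - 1)
      (by omega) (by push_cast at hd ⊢; omega)
    have eD (b : {b // b ≠ a}) : WeightedPath p q ≃ SignedInvolution {c // c ≠ a ∧ c ≠ b} d :=
      (nonempty_weightedPath_equiv_signedInvolution p q _ d
        (by rw [Fintype.card_subtype_ne_and_ne b.2]; omega) (by push_cast at hd ⊢; omega)).some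
    exact ⟨(WeightedPath.snocEquiv p q).symm.trans <|
      (sumCongr (eN.sumCongr eE) <|
        ((Fintype.equivFinOfCardEq hα₁).symm.prodCongr (Equiv.refl _)).trans
          (sigmaEquivProdOfEquiv fun b => (eD b).symm).symm).trans
      (decomposeAt a).symm⟩

theorem stmt9 (p q : ℕ) :
    Nonempty ({l : List (DStep × ℕ) // IsWeightedDelannoy p q l} ≃
        {x : Equiv.Perm (Fin (p + q)) × (Fin (p + q) → Bool) // IsSignedInv p q x}) ∧
      Nat.card {l : List (DStep × ℕ) // IsWeightedDelannoy p q l} = alphaCount p q := by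
  obtain ⟨e⟩ := nonempty_weightedPath_equiv_signedInvolution p q (Fin (p + q)) _ (by simp) rfl
  have e' := e.trans (SignedInvolution.equivSubtype _)
  exact ⟨⟨e'⟩, Nat.card_congr e'⟩
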